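/- For sl_2, the q-characters of Kirillov-Reshetikhin modules satisfy the T-system: χ_q(W_{k,a})·χ_q(W_{k,aq^2}) = χ_q(W_{k+1,a})·χ_q(W_{k-1,aq^2}) + m_{k,a} m_{k,aq^2} A_{aq}^{-1} A_{aq^3}^{-1} ··· A_{aq^{2k-1}}^{-1}, where χ_q(W_{k,a}) denotes the Laurent polynomial m_{k,a}(1 + A_{aq^{2k-1}}^{-1}(1 + A_{aq^{2k-3}}^{-1}(1+···(1+A_{aq}^{-1})···))) and χ_q(W_{0,b}) = 1. -/
import Mathlib


noncomputable section

/-- Laurent monomials in the variables `Y_b`, `b ∈ ℂˣ`, written additively: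
a monomial is its finitely supported exponent function. -/
abbrev Mon : Type := ℂˣ →₀ ℤ

/-- The Laurent polynomial ring `ℤ[Y_b^±]`. -/
abbrev Rng : Type := AddMonoidAlgebra ℤ Mon

/-- The variable `Y_b` as a monomial. -/
def Y (b : ℂˣ) : Mon := Finsupp.single b 1

/-- A monomial viewed as an element of the Laurent polynomial ring. -/
def X (m : Mon) : Rng := AddMonoidAlgebra.single m 1

/-- The monomial `A_b = Y_{bq⁻¹} Y_{bq}` (sl₂ case). -/
def Amon (q b : ℂˣ) : Mon := Y (b * q⁻¹) + Y (b * q)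

/-- The highest weight monomial `m_{k,a} = Y_a Y_{aq²} ⋯ Y_{aq^{2(k-1)}}`. -/
def mka (q : ℂˣ) (k : ℕ) (a : ℂˣ) : Mon := ∑ s ∈ Finset.range k, Y (a * q ^ (2 * s))

/-- The normalized q-character of the sl₂ Kirillov-Reshetikhin module, given by the
nested formula `1 + A_{aq^{2k-1}}⁻¹(1 + A_{aq^{2k-3}}⁻¹(1 + ⋯ (1 + A_{aq}⁻¹)⋯))`. -/
def Nchi (q : ℂˣ) : ℕ → ℂˣ → Rng
  | 0, _ => 1
  | (k+1), a => 1 + X (-(Amon q (a * q ^ (2 * k + 1)))) * Nchi q k a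

/-- The q-character `χ_q(W_{k,a}) = m_{k,a}(1 + A_{aq^{2k-1}}⁻¹(1 + ⋯ (1 + A_{aq}⁻¹)⋯))`. -/
def chiW (q : ℂˣ) (k : ℕ) (a : ℂˣ) : Rng := X (mka q k a) * Nchi q k a

/-- A monomial `m ≠ 1` is right-negative if for each `a`, at the maximal `q`-power shift
`L` where `m` is supported on `a q^L`, the exponent is negative. -/
def RightNeg (q : ℂˣ) (m : Mon) : Prop :=
  m ≠ 0 ∧ ∀ (a : ℂˣ) (L : ℤ), m (a * q ^ L) ≠ 0 →
    (∀ l : ℤ, L < l → m (a * q ^ l) = 0) → m (a * q ^ L) < 0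

/-- A monomial is dominant if all its exponents are nonnegative. -/
def Dominant (m : Mon) : Prop := ∀ b, 0 ≤ m b

lemma X_add (m n : Mon) : X (m + n) = X m * X n := by
  simp [X, AddMonoidAlgebra.single_mul_single]

lemma Nchi_shift (q : ℂˣ) (k : ℕ) (a : ℂˣ) :
    Nchi q (k + 1) a = Nchi q k (a * q ^ 2) +
      X (-(∑ s ∈ Finset.range (k + 1), Amon q (a * q ^ (2 * s + 1)))) := by
  induction k generalizing a with
  | zero => simp [Nchi]
  | succ n ih =>
    have hbq : a * q ^ 2 * q ^ (2 * n + 1) = a * q ^ (2 * (n + 1) + 1) := by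
      rw [mul_assoc, ← pow_add, show 2 + (2 * n + 1) = 2 * (n + 1) + 1 by omega]
    have h3 : Nchi q (n + 1) (a * q ^ 2)
        = 1 + X (-(Amon q (a * q ^ (2 * (n + 1) + 1)))) * Nchi q n (a * q ^ 2) := by
      show 1 + X (-(Amon q (a * q ^ 2 * q ^ (2 * n + 1)))) * Nchi q n (a * q ^ 2) = _
      rw [hbq]
    show 1 + X (-(Amon q (a * q ^ (2 * (n + 1) + 1)))) * Nchi q (n + 1) a = _
    rw [Finset.sum_range_succ (fun s => Amon q (a * q ^ (2 * s + 1))) (n + 1), ih, h3,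
      neg_add, X_add]
    ring

/-- the sl₂ T-system:
`χ_q(W_{k,a}) χ_q(W_{k,aq²}) = χ_q(W_{k+1,a}) χ_q(W_{k-1,aq²})
  + m_{k,a} m_{k,aq²} A_{aq}⁻¹ A_{aq³}⁻¹ ⋯ A_{aq^{2k-1}}⁻¹`. -/
theorem kr_sl2_T_system (q : ℂˣ) (hq : ∀ n : ℤ, n ≠ 0 → q ^ n ≠ 1)
    (k : ℕ) (hk : 1 ≤ k) (a : ℂˣ) :
    chiW q k a * chiW q k (a * q ^ 2) =
      chiW q (k + 1) a * chiW q (k - 1) (a * q ^ 2) +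
        X (mka q k a + mka q k (a * q ^ 2)
            - ∑ s ∈ Finset.range k, Amon q (a * q ^ (2 * s + 1))) := by
  obtain ⟨n, rfl⟩ : ∃ n, k = n + 1 := ⟨k - 1, (Nat.succ_pred_eq_of_pos hk).symm⟩
  simp only [Nat.add_sub_cancel, chiW]
  set b := a * q ^ 2 with hb
  set S : Mon := ∑ s ∈ Finset.range (n + 1), Amon q (a * q ^ (2 * s + 1)) with hS
  have hbq : b * q ^ (2 * n + 1) = a * q ^ (2 * (n + 1) + 1) := by
    rw [hb, mul_assoc, ← pow_add, show 2 + (2 * n + 1) = 2 * (n + 1) + 1 by omega]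
  have hbn : b * q ^ (2 * n) = a * q ^ (2 * (n + 1)) := by
    rw [hb, mul_assoc, ← pow_add, show 2 + 2 * n = 2 * (n + 1) by omega]
  have h1 : Nchi q (n + 1) a = Nchi q n b + X (-S) := Nchi_shift q n a
  have h2 : Nchi q (n + 1 + 1) a
      = Nchi q (n + 1) b + X (-S) * X (-(Amon q (a * q ^ (2 * (n + 1) + 1)))) := by
    rw [Nchi_shift q (n + 1) a, Finset.sum_range_succ, ← hS, neg_add, X_add]
  have h3 : Nchi q (n + 1) b
      = 1 + X (-(Amon q (a * q ^ (2 * (n + 1) + 1)))) * Nchi q n b := by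
    show 1 + X (-(Amon q (b * q ^ (2 * n + 1)))) * Nchi q n b = _
    rw [hbq]
  have hM : mka q (n + 1 + 1) a + mka q n b = mka q (n + 1) a + mka q (n + 1) b := by
    simp only [mka, Finset.sum_range_succ, hbn]
    abel
  have hPQ : X (mka q (n + 1) a) * X (mka q (n + 1) b)
      = X (mka q (n + 1 + 1) a) * X (mka q n b) := by
    rw [← X_add, ← X_add, hM]
  rw [sub_eq_add_neg, X_add, X_add, h1, h2, h3]
  linear_combination (Nchi q n b *
      (1 + X (-(Amon q (a * q ^ (2 * (n + 1) + 1)))) * Nchi q n b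
        + X (-S) * X (-(Amon q (a * q ^ (2 * (n + 1) + 1)))))) * hPQ
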